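/- Let r > 0, B = B_r(0), and let Ω₀, Ω ⊆ ℝ² be nonempty bounded open sets with equal mass |Ω| = |Ω₀|, equal momentum M(Ω) = M(Ω₀), and equal angular momentum i(Ω) = i(Ω₀) (as holds when Ω = Ω_t is the image of Ω₀ under the flow of a 2D incompressible ideal fluid with vorticity the indicator of the patch). Then ‖I_Ω − I_B‖_{L¹}² ≤ 4π · (sup_{x ∈ Ω₀ △ B} | |x|² − r² |) · ‖I_{Ω₀} − I_B‖_{L¹}; that is, |Ω △ B|² ≤ 4π · (sup_{x ∈ Ω₀ △ B} | |x|² − r² |) · |Ω₀ △ B|. -/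

import Mathlib

/-!
Put `B = B_r(0)` and `Q(A) = ∫_{A △ B} ||x|² - r²| dx`. Because `|x|² - r²` is nonnegative off `B`
and nonpositive on `B`, `Q(A) = i(A) - r²|A| - ∫_B (|x|² - r²)`, so `Q(Ω) = Q(Ω₀)`, and trivially
`Q(Ω₀) ≤ sup_{Ω₀ △ B} ||x|² - r²| · |Ω₀ △ B|`. Conversely `{x : ||x|² - r²| ≤ t}` is an annulus of
area at most `2πt`, so any set `E` has at least `|E| - 2πt` of its measure where `||x|² - r²| > t`;
integrating over `t` (layer cake) gives `|E|² ≤ 4π ∫_E ||x|² - r²|`, and `E = Ω △ B` finishes.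
-/

open MeasureTheory Metric

/-- The plane `ℝ²`. -/
abbrev Plane := EuclideanSpace ℝ (Fin 2)

/-- The mass `|A|` of a set: its two-dimensional Lebesgue measure. -/
noncomputable def mass (A : Set Plane) : ℝ := (volume A).toReal

/-- The momentum `M(A) = ∫_A x dx`. -/
noncomputable def mom (A : Set Plane) : Plane := ∫ x in A, x

/-- The angular momentum `i(A) = ∫_A |x|² dx`. -/
noncomputable def angMom (A : Set Plane) : ℝ := ∫ x in A, ‖x‖ ^ 2

/-- `Q(A; B_r(x₀)) = ∫_{A △ B_r(x₀)} | |x − x₀|² − r² | dx`. -/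
noncomputable def Qfun (A : Set Plane) (x₀ : Plane) (r : ℝ) : ℝ :=
  ∫ x in symmDiff A (ball x₀ r), |‖x - x₀‖ ^ 2 - r ^ 2|

open Set Bornology Real

theorem Continuous.integrableOn_of_isBounded {X : Type*} [MetricSpace X] [ProperSpace X]
    [MeasurableSpace X] [OpensMeasurableSpace X] {μ : Measure X} [IsFiniteMeasureOnCompacts μ]
    {f : X → ℝ} (hf : Continuous f) {s : Set X} (hs : IsBounded s) : IntegrableOn f s μ :=
  (hf.continuousOn.integrableOn_compact hs.isCompact_closure).mono_set subset_closure

theorem Real.le_biSup_of_bddAbove_image {β : Type*} {f : β → ℝ} {s : Set β}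
    (hbdd : BddAbove (f '' s)) {x : β} (hx : x ∈ s) : f x ≤ ⨆ y ∈ s, f y := by
  obtain ⟨C, hC⟩ := hbdd
  -- off `s`, the inner supremum is `sSup ∅ = 0`
  have hbdd' : BddAbove (range fun y => ⨆ _ : y ∈ s, f y) := by
    refine ⟨max C 0, forall_mem_range.2 fun y => Real.iSup_le (fun hy => ?_) (le_max_right _ _)⟩
    exact (hC (mem_image_of_mem f hy)).trans (le_max_left _ _)
  simpa only [ciSup_pos hx] using le_ciSup hbdd' x

section MeasureSpace

variable {α : Type*} [MeasurableSpace α] {μ : Measure α}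

theorem setIntegral_le_biSup_mul_measureReal {s : Set α} {f : α → ℝ} (hs : MeasurableSet s)
    (hμs : μ s ≠ ⊤) (hf : IntegrableOn f s μ) (hbdd : BddAbove (f '' s)) :
    ∫ x in s, f x ∂μ ≤ (⨆ x ∈ s, f x) * μ.real s :=
  calc ∫ x in s, f x ∂μ ≤ ∫ _ in s, ⨆ x ∈ s, f x ∂μ :=
        setIntegral_mono_on hf (integrableOn_const hμs) hs
          fun _ hx => Real.le_biSup_of_bddAbove_image hbdd hx
    _ = (⨆ x ∈ s, f x) * μ.real s := by rw [setIntegral_const, smul_eq_mul, mul_comm]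

theorem setIntegral_abs_symmDiff_eq_sub {s t : Set α} {f : α → ℝ} (hs : MeasurableSet s)
    (ht : MeasurableSet t) (hfs : IntegrableOn f s μ) (hft : IntegrableOn f t μ)
    (hf_nonneg : ∀ x ∈ s \ t, 0 ≤ f x) (hf_nonpos : ∀ x ∈ t \ s, f x ≤ 0) :
    ∫ x in symmDiff s t, |f x| ∂μ = ∫ x in s, f x ∂μ - ∫ x in t, f x ∂μ := by
  rw [Set.symmDiff_def, setIntegral_union disjoint_sdiff_sdiff (ht.diff hs)
      (hfs.mono_set sdiff_subset).abs (hft.mono_set sdiff_subset).abs,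
    setIntegral_congr_fun (hs.diff ht) fun x hx => abs_of_nonneg (hf_nonneg x hx),
    setIntegral_congr_fun (ht.diff hs) fun x hx => abs_of_nonpos (hf_nonpos x hx), integral_neg,
    ← integral_inter_add_sdiff ht hfs, ← integral_inter_add_sdiff hs hft, inter_comm]
  ring

theorem setLIntegral_Ioc_ofReal_sub_mul {a c : ℝ} (ha : 0 ≤ a) (hc : 0 < c) :
    ∫⁻ t in Ioc 0 (a / c), ENNReal.ofReal (a - c * t) = ENNReal.ofReal (a ^ 2 / (2 * c)) := by
  have hint : ∫ t in (0 : ℝ)..a / c, (a - c * t) = a ^ 2 / (2 * c) := by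
    rw [intervalIntegral.integral_sub intervalIntegrable_const
        (intervalIntegral.intervalIntegrable_id.const_mul c),
      intervalIntegral.integral_const, intervalIntegral.integral_const_mul, integral_id, smul_eq_mul]
    field_simp
    ring
  rw [← hint, intervalIntegral.integral_of_le (by positivity), ofReal_integral_eq_lintegral_ofReal]
  · exact (continuous_const.sub (continuous_const_mul c)).integrableOn_Ioc
  · refine (ae_restrict_iff' measurableSet_Ioc).2 (ae_of_all _ fun t ht => ?_)
    simpa using (le_div_iff₀' hc).1 ht.2

theorem measureReal_sq_le_two_mul_setIntegral {E : Set α} {f : α → ℝ} {c : ℝ} (hc : 0 < c)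
    (hE : MeasurableSet E) (hμE : μ E ≠ ⊤) (hf_nonneg : ∀ x ∈ E, 0 ≤ f x)
    (hf : IntegrableOn f E μ)
    (hsublevel : ∀ t, 0 < t → μ (E ∩ {x | f x ≤ t}) ≤ ENNReal.ofReal (c * t)) :
    μ.real E ^ 2 ≤ 2 * c * ∫ x in E, f x ∂μ := by
  set a := μ.real E
  have hnn : 0 ≤ᵐ[μ.restrict E] f := (ae_restrict_iff' hE).2 (ae_of_all _ hf_nonneg)
  have hsuperlevel : ∀ t ∈ Ioc 0 (a / c),
      ENNReal.ofReal (a - c * t) ≤ μ.restrict E {x | t < f x} := by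
    intro t ht
    rw [Measure.restrict_apply' hE, ENNReal.ofReal_sub _ (mul_nonneg hc.le ht.1.le),
      ofReal_measureReal hμE, tsub_le_iff_right]
    calc μ E ≤ μ ({x | t < f x} ∩ E ∪ E ∩ {x | f x ≤ t}) :=
          measure_mono fun x hx => (lt_or_ge t (f x)).imp (⟨·, hx⟩) (⟨hx, ·⟩)
      _ ≤ μ ({x | t < f x} ∩ E) + ENNReal.ofReal (c * t) :=
          (measure_union_le _ _).trans (add_le_add_right (hsublevel t ht.1) _)
  have hlayer : ENNReal.ofReal (a ^ 2 / (2 * c)) ≤ ENNReal.ofReal (∫ x in E, f x ∂μ) := by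
    rw [ofReal_integral_eq_lintegral_ofReal hf hnn,
      lintegral_eq_lintegral_meas_lt _ hnn hf.aemeasurable,
      ← setLIntegral_Ioc_ofReal_sub_mul measureReal_nonneg hc]
    exact (setLIntegral_mono' measurableSet_Ioc hsuperlevel).trans
      (lintegral_mono_set Ioc_subset_Ioi_self)
  have := (ENNReal.ofReal_le_ofReal_iff (setIntegral_nonneg hE hf_nonneg)).1 hlayer
  rw [div_le_iff₀ (by positivity)] at this
  linarith

end MeasureSpace

theorem volume_setOf_abs_sq_norm_sub_sq_le (r : ℝ) {t : ℝ} (ht : 0 ≤ t) :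
    volume {x : Plane | |‖x‖ ^ 2 - r ^ 2| ≤ t} ≤ ENNReal.ofReal (2 * π * t) := by
  have hsub : {x : Plane | |‖x‖ ^ 2 - r ^ 2| ≤ t}
      ⊆ closedBall 0 √(r ^ 2 + t) \ ball 0 √(r ^ 2 - t) := by
    intro x (hx : |‖x‖ ^ 2 - r ^ 2| ≤ t)
    replace hx := abs_le.1 hx
    simp only [mem_sdiff, mem_closedBall, mem_ball, dist_zero_right, not_lt]
    refine ⟨(Real.le_sqrt (norm_nonneg x) (by positivity)).2 (by linarith), ?_⟩
    exact (Real.sqrt_le_left (norm_nonneg x)).2 (by linarith)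
  have hradii : √(r ^ 2 - t) ≤ √(r ^ 2 + t) := Real.sqrt_le_sqrt (by linarith)
  refine (measure_mono hsub).trans ?_
  rw [measure_sdiff (ball_subset_closedBall.trans (closedBall_subset_closedBall hradii))
      measurableSet_ball.nullMeasurableSet measure_ball_lt_top.ne,
    EuclideanSpace.volume_closedBall_fin_two, EuclideanSpace.volume_ball_fin_two,
    ← ENNReal.ofReal_pow (Real.sqrt_nonneg _), ← ENNReal.ofReal_pow (Real.sqrt_nonneg _),
    ← ENNReal.ofReal_mul (by positivity), ← ENNReal.ofReal_mul (by positivity),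
    ← ENNReal.ofReal_sub _ (by positivity), Real.sq_sqrt (by positivity), Real.sq_sqrt']
  refine ENNReal.ofReal_le_ofReal ?_
  nlinarith [le_max_left (r ^ 2 - t) 0, pi_pos]

theorem mass_sq_le_four_pi_mul_setIntegral_abs_sq_norm_sub_sq {E : Set Plane}
    (hE : MeasurableSet E) (hEb : IsBounded E) (r : ℝ) :
    mass E ^ 2 ≤ 4 * π * ∫ x in E, |‖x‖ ^ 2 - r ^ 2| := by
  have h := measureReal_sq_le_two_mul_setIntegral (μ := volume) two_pi_pos hE
    hEb.measure_lt_top.ne (fun x _ => abs_nonneg (‖x‖ ^ 2 - r ^ 2))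
    ((by fun_prop : Continuous fun x : Plane => |‖x‖ ^ 2 - r ^ 2|).integrableOn_of_isBounded hEb)
    fun t ht => (measure_mono inter_subset_right).trans
      (volume_setOf_abs_sq_norm_sub_sq_le r ht.le)
  rw [mass, ← measureReal_def]
  linarith

theorem setIntegral_sq_norm_sub_sq {A : Set Plane} (hA : IsBounded A) (r : ℝ) :
    ∫ x in A, (‖x‖ ^ 2 - r ^ 2) = angMom A - r ^ 2 * mass A := by
  rw [integral_sub ((by fun_prop : Continuous fun x : Plane => ‖x‖ ^ 2).integrableOn_of_isBounded hA)
      (integrableOn_const hA.measure_lt_top.ne),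
    setIntegral_const, angMom, mass, smul_eq_mul, measureReal_def, mul_comm]

theorem Qfun_zero_eq {A : Set Plane} (hA : MeasurableSet A) (hAb : IsBounded A) {r : ℝ}
    (hr : 0 ≤ r) :
    Qfun A 0 r = angMom A - r ^ 2 * mass A - ∫ x in ball (0 : Plane) r, (‖x‖ ^ 2 - r ^ 2) := by
  have hf : Continuous fun x : Plane => ‖x‖ ^ 2 - r ^ 2 := by fun_prop
  simp only [Qfun, sub_zero]
  rw [setIntegral_abs_symmDiff_eq_sub hA measurableSet_ball (hf.integrableOn_of_isBounded hAb)
      (hf.integrableOn_of_isBounded isBounded_ball),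
    setIntegral_sq_norm_sub_sq hAb]
  · intro x hx
    have : r ≤ ‖x‖ := by simpa using hx.2
    nlinarith
  · intro x hx
    have : ‖x‖ < r := by simpa using hx.1
    nlinarith [norm_nonneg x]

theorem Qfun_zero_le_biSup_mul_mass {A : Set Plane} (hA : MeasurableSet A) (hAb : IsBounded A)
    (r : ℝ) :
    Qfun A 0 r ≤ (⨆ x ∈ symmDiff A (ball (0 : Plane) r), |‖x‖ ^ 2 - r ^ 2|)
      * mass (symmDiff A (ball (0 : Plane) r)) := by
  have hf : Continuous fun x : Plane => |‖x‖ ^ 2 - r ^ 2| := by fun_prop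
  have hSb : IsBounded (symmDiff A (ball (0 : Plane) r)) :=
    (hAb.union isBounded_ball).subset symmDiff_subset_union
  simp only [Qfun, sub_zero]
  exact setIntegral_le_biSup_mul_measureReal (hA.symmDiff measurableSet_ball)
    hSb.measure_lt_top.ne (hf.integrableOn_of_isBounded hSb)
    ((hSb.isCompact_closure.bddAbove_image hf.continuousOn).mono (image_mono subset_closure))

theorem stmt12_general (r : ℝ) (hr : 0 < r) (Ω₀ Ω : Set Plane)
    (hΩ₀ : IsOpen Ω₀) (hΩ₀b : Bornology.IsBounded Ω₀)
    (hΩ : IsOpen Ω) (hΩb : Bornology.IsBounded Ω)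
    (hmass : mass Ω = mass Ω₀) (hang : angMom Ω = angMom Ω₀) :
    (mass (symmDiff Ω (ball (0 : Plane) r))) ^ 2
      ≤ 4 * Real.pi * (⨆ x ∈ symmDiff Ω₀ (ball (0 : Plane) r), |‖x‖ ^ 2 - r ^ 2|)
          * mass (symmDiff Ω₀ (ball (0 : Plane) r)) := by
  have hQ : Qfun Ω 0 r = Qfun Ω₀ 0 r := by
    rw [Qfun_zero_eq hΩ.measurableSet hΩb hr.le, Qfun_zero_eq hΩ₀.measurableSet hΩ₀b hr.le, hmass,
      hang]
  have hSb : IsBounded (symmDiff Ω (ball (0 : Plane) r)) :=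
    (hΩb.union isBounded_ball).subset symmDiff_subset_union
  calc mass (symmDiff Ω (ball (0 : Plane) r)) ^ 2 ≤ 4 * π * Qfun Ω 0 r := by
        simpa only [Qfun, sub_zero] using mass_sq_le_four_pi_mul_setIntegral_abs_sq_norm_sub_sq
          (hΩ.measurableSet.symmDiff measurableSet_ball) hSb r
    _ = 4 * π * Qfun Ω₀ 0 r := by rw [hQ]
    _ ≤ 4 * π * ((⨆ x ∈ symmDiff Ω₀ (ball (0 : Plane) r), |‖x‖ ^ 2 - r ^ 2|)
          * mass (symmDiff Ω₀ (ball (0 : Plane) r))) := by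
        gcongr
        exact Qfun_zero_le_biSup_mul_mass hΩ₀.measurableSet hΩ₀b r
    _ = _ := by ring

/-- main theorem: For `r > 0`, `B = B_r(0)`, and nonempty bounded
open sets `Ω₀, Ω ⊆ ℝ²` with equal mass, momentum and angular momentum (as holds
when `Ω = Ω_t` is the image of `Ω₀` under the flow of a 2D incompressible ideal
fluid with vorticity the indicator of the patch):
`|Ω △ B|² ≤ 4π · (sup_{x ∈ Ω₀ △ B} ||x|² − r²|) · |Ω₀ △ B|`. -/
theorem stmt12 (r : ℝ) (hr : 0 < r) (Ω₀ Ω : Set Plane)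
    (hΩ₀ : IsOpen Ω₀) (hΩ₀b : Bornology.IsBounded Ω₀) (hΩ₀ne : Ω₀.Nonempty)
    (hΩ : IsOpen Ω) (hΩb : Bornology.IsBounded Ω) (hΩne : Ω.Nonempty)
    (hmass : mass Ω = mass Ω₀) (hmom : mom Ω = mom Ω₀) (hang : angMom Ω = angMom Ω₀) :
    (mass (symmDiff Ω (ball (0 : Plane) r))) ^ 2
      ≤ 4 * Real.pi * (⨆ x ∈ symmDiff Ω₀ (ball (0 : Plane) r), |‖x‖ ^ 2 - r ^ 2|)
          * mass (symmDiff Ω₀ (ball (0 : Plane) r)) :=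
  stmt12_general r hr Ω₀ Ω hΩ₀ hΩ₀b hΩ hΩb hmass hang
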